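/- arXiv:1810.02071 — 3 statements merged into one kernel-verified Lean document; each statement's English description precedes it below -/
import Mathlib

section
/- Path-wise look-ahead bias bound: define B̂_n = (1[Z_n ≤ C_n] − 1[Z_n ≤ C'_n])(V_n − Z_n), where C'_n = C_n − h_n(V_n − C_n)/(1−h_n) with h_n ∈ [0,1). Then B̂_n ≤ 1[ |C_n − Z_n| ≤ h_n |V_n − Z_n| ] · |V_n − Z_n|. -/
/-- Path-wise look-ahead bias bound. With
`B̂ = (1[Z ≤ C] − 1[Z ≤ C'])(V − Z)` and
`C' = C − h(V − C)/(1 − h)`, `h ∈ [0,1)`, we have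
`B̂ ≤ 1[|C − Z| ≤ h|V − Z|]·|V − Z|`. -/
theorem pathwise_lookahead_bias_bound (C C' Z V h : ℝ)
    (hh0 : 0 ≤ h) (hh1 : h < 1)
    (hC' : C' = C - h * (V - C) / (1 - h)) :
    ((if Z ≤ C then (1 : ℝ) else 0) - (if Z ≤ C' then (1 : ℝ) else 0)) * (V - Z)
      ≤ (if |C - Z| ≤ h * |V - Z| then (1 : ℝ) else 0) * |V - Z| := by
  have h1 : (0:ℝ) < 1 - h := by linarith
  have hd : h * (V - C) / (1 - h) * (1 - h) = h * (V - C) :=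
    div_mul_cancel₀ _ (ne_of_gt h1)
  have hrhs0 : (0:ℝ) ≤ (if |C - Z| ≤ h * |V - Z| then (1 : ℝ) else 0) * |V - Z| := by
    split_ifs <;> simp [abs_nonneg]
  rcases le_or_gt Z C with hZC | hZC <;>
    rcases le_or_gt Z C' with hZC' | hZC'
  · simpa [hZC, hZC'] using hrhs0
  · -- Z ≤ C, C' < Z
    have key : (C - Z) * (1 - h) < h * (V - C) := by
      have : C - Z < h * (V - C) / (1 - h) := by rw [hC'] at hZC'; linarith
      nlinarith [mul_lt_mul_of_pos_right this h1]
    have hV : Z ≤ V := by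
      nlinarith [mul_nonneg (sub_nonneg.2 hZC) h1.le,
        mul_nonneg hh0 (sub_nonneg.2 hZC)]
    have hcond : |C - Z| ≤ h * |V - Z| := by
      rw [abs_of_nonneg (by linarith), abs_of_nonneg (by linarith)]
      nlinarith
    rw [if_pos hZC, if_neg (not_le.2 hZC'), if_pos hcond,
      abs_of_nonneg (by linarith : (0:ℝ) ≤ V - Z)]
    linarith
  · -- C < Z ≤ C'
    have key : h * (V - C) ≤ (C - Z) * (1 - h) := by
      have : h * (V - C) / (1 - h) ≤ C - Z := by rw [hC'] at hZC'; linarith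
      nlinarith [mul_le_mul_of_nonneg_right this h1.le]
    have hV : V ≤ Z := by
      nlinarith [mul_nonneg (sub_nonneg.2 hZC.le) h1.le,
        mul_nonneg hh0 (sub_nonneg.2 hZC.le)]
    have hcond : |C - Z| ≤ h * |V - Z| := by
      rw [abs_of_nonpos (by linarith), abs_of_nonpos (by linarith)]
      nlinarith
    rw [if_neg (not_le.2 hZC), if_pos hZC', if_pos hcond,
      abs_of_nonpos (by linarith : V - Z ≤ 0)]
    linarith
  · simpa [not_le.2 hZC, not_le.2 hZC'] using hrhs0
end

section
/- Decomposition of the expected value of max with noise: for real numbers Z, C and a random variable ξ with finite mean, letting d = Z − C, E[max(Z, C + ξ)] − max(Z, C) = Cov(1[ξ ≥ d], ξ) + (Z − d·P[ξ ≥ d] − max(Z, C)) + E[ξ]·P[ξ ≥ d]. In particular, when E[ξ] = 0 the first term equals E[1[ξ ≥ d]ξ] and is nonnegative. -/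
/-!
Pointwise `max Z (C + ξ) = Z + 1[d ≤ ξ] (ξ - d)`, so
`E[max Z (C + ξ)] = Z + E[1[d ≤ ξ] ξ] - d P[d ≤ ξ]` and the decomposition is a rearrangement.
The covariance `Cov(1[d ≤ ξ], ξ)` is nonnegative for every `d`: `(1[d ≤ ξ] - p) (ξ - d) ≥ 0`
pointwise whenever `0 ≤ p ≤ 1`, and for `p = P[d ≤ ξ]` its expectation is exactly that covariance.
-/

open MeasureTheory

theorem max_add_eq_add_ite {α : Type*} [AddCommGroup α] [LinearOrder α] [IsOrderedAddMonoid α]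
    (z c x : α) : max z (c + x) = z + if z - c ≤ x then x - (z - c) else 0 := by
  split_ifs with h
  · rw [max_eq_right (by rwa [sub_le_iff_le_add'] at h)]; abel
  · rw [max_eq_left (by rw [sub_le_iff_le_add'] at h; exact (lt_of_not_ge h).le), add_zero]

section

variable {Ω : Type*} [MeasurableSpace Ω] {μ : Measure Ω} {ξ : Ω → ℝ}

theorem integral_indicator_sub_const [IsFiniteMeasure μ] {s : Set Ω}
    (hs : NullMeasurableSet s μ) (hξ : Integrable ξ μ) (d : ℝ) :
    ∫ ω, s.indicator (fun ω => ξ ω - d) ω ∂μ = ∫ ω in s, ξ ω ∂μ - μ.real s * d := by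
  rw [integral_indicator₀ hs, integral_sub hξ.integrableOn (integrable_const d),
    setIntegral_const, smul_eq_mul]

theorem integral_max_const_add [IsProbabilityMeasure μ] (hξ : Integrable ξ μ) (z c : ℝ) :
    ∫ ω, max z (c + ξ ω) ∂μ
      = z + ∫ ω, {ω | z - c ≤ ξ ω}.indicator (fun ω => ξ ω - (z - c)) ω ∂μ := by
  have hs : NullMeasurableSet {ω | z - c ≤ ξ ω} μ :=
    nullMeasurableSet_le aemeasurable_const hξ.aemeasurable
  have hmax : ∀ ω, max z (c + ξ ω)
      = z + {ω | z - c ≤ ξ ω}.indicator (fun ω => ξ ω - (z - c)) ω := fun ω => by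
    rw [max_add_eq_add_ite]; rfl
  simp_rw [hmax]
  have hint : Integrable (fun ω => ξ ω - (z - c)) μ := hξ.sub (integrable_const _)
  rw [integral_add (integrable_const z) (hint.indicator₀ hs),
    integral_const, probReal_univ, one_smul]

theorem measureReal_mul_integral_le_setIntegral [IsProbabilityMeasure μ] (hξ : Integrable ξ μ)
    (d : ℝ) : μ.real {ω | d ≤ ξ ω} * ∫ ω, ξ ω ∂μ ≤ ∫ ω in {ω | d ≤ ξ ω}, ξ ω ∂μ := by
  set s := {ω | d ≤ ξ ω}
  set p := μ.real s
  have hs : NullMeasurableSet s μ :=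
    nullMeasurableSet_le aemeasurable_const hξ.aemeasurable
  have hpos : 0 ≤ fun ω => s.indicator (fun ω => ξ ω - d) ω - p * (ξ ω - d) := by
    intro ω
    dsimp only [Pi.zero_apply]
    by_cases hω : ω ∈ s
    · have : p ≤ 1 := measureReal_le_one
      rw [Set.indicator_of_mem hω]
      nlinarith [show d ≤ ξ ω from hω]
    · have : 0 ≤ p := measureReal_nonneg
      rw [Set.indicator_of_notMem hω]
      nlinarith [lt_of_not_ge (show ¬ d ≤ ξ ω from hω)]
  have hint : Integrable (fun ω => ξ ω - d) μ := hξ.sub (integrable_const d)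
  have hcov : ∫ ω, s.indicator (fun ω => ξ ω - d) ω - p * (ξ ω - d) ∂μ
      = ∫ ω in s, ξ ω ∂μ - p * ∫ ω, ξ ω ∂μ := by
    rw [integral_sub (hint.indicator₀ hs) (hint.const_mul p), integral_indicator_sub_const hs hξ,
      integral_const_mul, integral_sub hξ (integrable_const d), integral_const, probReal_univ,
      one_smul]
    ring
  exact sub_nonneg.mp (hcov ▸ integral_nonneg hpos)

end

theorem max_noise_decomposition_general {Ω : Type*} [MeasurableSpace Ω]
    (μ : Measure Ω) [IsProbabilityMeasure μ]
    (ξ : Ω → ℝ) (hint : Integrable ξ μ)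
    (Z C d : ℝ) (hd : d = Z - C) :
    (∫ ω, max Z (C + ξ ω) ∂μ) - max Z C
      = ((∫ ω, (if d ≤ ξ ω then (1 : ℝ) else 0) * ξ ω ∂μ)
          - (∫ ω, (if d ≤ ξ ω then (1 : ℝ) else 0) ∂μ) * (∫ ω, ξ ω ∂μ))
        + (Z - d * (μ {ω | d ≤ ξ ω}).toReal - max Z C)
        + (∫ ω, ξ ω ∂μ) * (μ {ω | d ≤ ξ ω}).toReal ∧
    ((∫ ω, ξ ω ∂μ) = 0 →
      ((∫ ω, (if d ≤ ξ ω then (1 : ℝ) else 0) * ξ ω ∂μ)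
          - (∫ ω, (if d ≤ ξ ω then (1 : ℝ) else 0) ∂μ) * (∫ ω, ξ ω ∂μ))
        = ∫ ω, (if d ≤ ξ ω then (1 : ℝ) else 0) * ξ ω ∂μ ∧
      0 ≤ ∫ ω, (if d ≤ ξ ω then (1 : ℝ) else 0) * ξ ω ∂μ) := by
  set s := {ω | d ≤ ξ ω}
  have hs : NullMeasurableSet s μ := nullMeasurableSet_le aemeasurable_const hint.aemeasurable
  have hindicator : ∀ ω, (if d ≤ ξ ω then (1 : ℝ) else 0) * ξ ω = s.indicator ξ ω := fun ω => by
    rw [ite_mul, one_mul, zero_mul]; rfl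
  have hprob : ∫ ω, (if d ≤ ξ ω then (1 : ℝ) else 0) ∂μ = μ.real s := by
    change ∫ ω, s.indicator (fun _ => (1 : ℝ)) ω ∂μ = _
    rw [integral_indicator₀ hs, setIntegral_const, smul_eq_mul, mul_one]
  simp_rw [hindicator, hprob, ← measureReal_def]
  rw [integral_indicator₀ hs, integral_max_const_add hint, ← hd,
    integral_indicator_sub_const hs hint]
  refine ⟨by ring, fun hmean => ⟨by rw [hmean, mul_zero, sub_zero], ?_⟩⟩
  simpa [hmean] using measureReal_mul_integral_le_setIntegral hint d

/-- Decomposition of the expected value of max with noise. For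
reals Z, C, an integrable random variable ξ, and `d = Z − C`,
`E[max(Z, C + ξ)] − max(Z, C)
  = Cov(1[ξ ≥ d], ξ) + (Z − d·P[ξ ≥ d] − max(Z, C)) + E[ξ]·P[ξ ≥ d]`,
and when `E[ξ] = 0` the covariance term equals `E[1[ξ ≥ d]ξ]` and is
nonnegative. -/
theorem max_noise_decomposition {Ω : Type*} [MeasurableSpace Ω]
    (μ : Measure Ω) [IsProbabilityMeasure μ]
    (ξ : Ω → ℝ) (hmeas : Measurable ξ) (hint : Integrable ξ μ)
    (Z C d : ℝ) (hd : d = Z - C) :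
    (∫ ω, max Z (C + ξ ω) ∂μ) - max Z C
      = ((∫ ω, (if d ≤ ξ ω then (1 : ℝ) else 0) * ξ ω ∂μ)
          - (∫ ω, (if d ≤ ξ ω then (1 : ℝ) else 0) ∂μ) * (∫ ω, ξ ω ∂μ))
        + (Z - d * (μ {ω | d ≤ ξ ω}).toReal - max Z C)
        + (∫ ω, ξ ω ∂μ) * (μ {ω | d ≤ ξ ω}).toReal ∧
    ((∫ ω, ξ ω ∂μ) = 0 →
      ((∫ ω, (if d ≤ ξ ω then (1 : ℝ) else 0) * ξ ω ∂μ)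
          - (∫ ω, (if d ≤ ξ ω then (1 : ℝ) else 0) ∂μ) * (∫ ω, ξ ω ∂μ))
        = ∫ ω, (if d ≤ ξ ω then (1 : ℝ) else 0) * ξ ω ∂μ ∧
      0 ≤ ∫ ω, (if d ≤ ξ ω then (1 : ℝ) else 0) * ξ ω ∂μ) :=
  max_noise_decomposition_general μ ξ hint Z C d hd
end

section
/- Expected bias bound via Cauchy–Schwarz and Markov: let B = 1[|C − Z| ≤ h|V − Z|]·|V − Z| with h ≥ 0, and let E be any event with 1[Eᶜ] implying h ≤ kM/N and |C − Z| ≥ c. Then E[B] ≤ (P[E]·E[(V−Z)²])^{1/2} + (kM/(cN))·E[(V−Z)²]. -/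
/-!
Off `E`, the indicator can only fire when `c ≤ |C − Z| ≤ h|V − Z| ≤ (kM/N)|V − Z|`, and then
`|V − Z| ≤ (kM/(cN))|V − Z|²`: this is the pointwise form of Markov's inequality. On `E` we bound
`B` by `|V − Z|` and apply Cauchy–Schwarz against `1_E`.
-/

open MeasureTheory

theorem le_div_mul_sq_of_le_mul {a c g : ℝ} (hc : 0 < c) (hg : 0 ≤ g) (hcg : c ≤ a * g) :
    g ≤ a / c * g ^ 2 := by
  rw [div_mul_eq_mul_div, le_div_iff₀ hc]
  nlinarith

section

variable {Ω : Type*} [MeasurableSpace Ω] {μ : Measure Ω}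

theorem setIntegral_le_sqrt_measureReal_mul_integral_sq [IsFiniteMeasure μ] {s : Set Ω}
    {g : Ω → ℝ} (hg0 : 0 ≤ᵐ[μ] g) (hg : MemLp g 2 μ) :
    ∫ ω in s, g ω ∂μ ≤ √(μ.real s * ∫ ω, g ω ^ 2 ∂μ) := by
  have hpq : Real.HolderConjugate 2 2 := Real.HolderConjugate.two_two
  have hCS := integral_mul_le_Lp_mul_Lq_of_nonneg (μ := μ.restrict s) hpq
    (f := fun _ => (1 : ℝ)) (g := g) (ae_of_all _ fun _ => zero_le_one) (ae_restrict_of_ae hg0)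
    (by simpa using memLp_const (μ := μ.restrict s) (p := 2) (1 : ℝ)) (by simpa using hg.restrict s)
  have hsq : ∫ ω in s, g ω ^ 2 ∂μ ≤ ∫ ω, g ω ^ 2 ∂μ :=
    setIntegral_le_integral ((memLp_two_iff_integrable_sq hg.1).1 hg)
      (ae_of_all _ fun _ => sq_nonneg _)
  simp only [one_mul, Real.rpow_two, one_pow, integral_const, smul_eq_mul, mul_one,
    ← Real.sqrt_eq_rpow, measureReal_restrict_apply_univ] at hCS
  calc ∫ ω in s, g ω ∂μ ≤ √(μ.real s) * √(∫ ω in s, g ω ^ 2 ∂μ) := hCS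
    _ ≤ √(μ.real s) * √(∫ ω, g ω ^ 2 ∂μ) := by gcongr
    _ = √(μ.real s * ∫ ω, g ω ^ 2 ∂μ) := (Real.sqrt_mul measureReal_nonneg _).symm

theorem integral_le_sqrt_add_of_le_indicator_add [IsFiniteMeasure μ] {s : Set Ω} {f g : Ω → ℝ}
    {b : ℝ} (hs : MeasurableSet s) (hf0 : 0 ≤ᵐ[μ] f) (hg0 : 0 ≤ᵐ[μ] g) (hg : MemLp g 2 μ)
    (hfg : ∀ᵐ ω ∂μ, f ω ≤ s.indicator g ω + b * g ω ^ 2) :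
    ∫ ω, f ω ∂μ ≤ √(μ.real s * ∫ ω, g ω ^ 2 ∂μ) + b * ∫ ω, g ω ^ 2 ∂μ := by
  have hg_int : Integrable g μ := hg.integrable one_le_two
  have hsq_int : Integrable (fun ω => g ω ^ 2) μ := (memLp_two_iff_integrable_sq hg.1).1 hg
  calc ∫ ω, f ω ∂μ ≤ ∫ ω, (s.indicator g ω + b * g ω ^ 2) ∂μ :=
        integral_mono_of_nonneg hf0 ((hg_int.indicator hs).add (hsq_int.const_mul b)) hfg
    _ = ∫ ω in s, g ω ∂μ + b * ∫ ω, g ω ^ 2 ∂μ := by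
        rw [integral_add (hg_int.indicator hs) (hsq_int.const_mul b), integral_indicator hs,
          integral_const_mul]
    _ ≤ √(μ.real s * ∫ ω, g ω ^ 2 ∂μ) + b * ∫ ω, g ω ^ 2 ∂μ := by
        gcongr
        exact setIntegral_le_sqrt_measureReal_mul_integral_sq hg0 hg

end

theorem expected_bias_bound_general {Ω : Type*} [MeasurableSpace Ω]
    (μ : Measure Ω) [IsProbabilityMeasure μ]
    (V Z C h : Ω → ℝ)
    (c k M N : ℝ) (hc : 0 < c) (hk : 0 < k) (hM : 0 < M) (hN : 0 < N)
    (E : Set Ω) (hE : MeasurableSet E)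
    (hEc : ∀ ω ∉ E, h ω ≤ k * M / N ∧ c ≤ |C ω - Z ω|)
    (hint : Integrable (fun ω => (V ω - Z ω) ^ 2) μ) :
    (∫ ω, (if |C ω - Z ω| ≤ h ω * |V ω - Z ω| then (1 : ℝ) else 0)
        * |V ω - Z ω| ∂μ)
      ≤ Real.sqrt ((μ E).toReal * ∫ ω, (V ω - Z ω) ^ 2 ∂μ)
        + (k * M / (c * N)) * ∫ ω, (V ω - Z ω) ^ 2 ∂μ := by
  set g : Ω → ℝ := fun ω => |V ω - Z ω|
  have hg : MemLp g 2 μ := by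
    have hg_meas : AEStronglyMeasurable g μ := by
      simpa only [g, Real.sqrt_sq_eq_abs] using
        Real.continuous_sqrt.comp_aestronglyMeasurable hint.aestronglyMeasurable
    exact (memLp_two_iff_integrable_sq hg_meas).2 (by simpa only [g, sq_abs] using hint)
  have hbound : ∀ ω, (if |C ω - Z ω| ≤ h ω * g ω then (1 : ℝ) else 0) * g ω
      ≤ E.indicator g ω + k * M / (c * N) * g ω ^ 2 := by
    intro ω
    have hsq_nonneg : 0 ≤ k * M / (c * N) * g ω ^ 2 := by positivity
    by_cases hωE : ω ∈ E
    · rw [Set.indicator_of_mem hωE]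
      split_ifs <;> linarith [abs_nonneg (V ω - Z ω)]
    · obtain ⟨hh_le, hc_le⟩ := hEc ω hωE
      rw [Set.indicator_of_notMem hωE, zero_add]
      split_ifs with hbias
      · rw [one_mul, mul_comm c N, ← div_div]
        refine le_div_mul_sq_of_le_mul hc (abs_nonneg _) (hc_le.trans (hbias.trans ?_))
        exact mul_le_mul_of_nonneg_right hh_le (abs_nonneg _)
      · rwa [zero_mul]
  simpa only [g, sq_abs, measureReal_def] using
    integral_le_sqrt_add_of_le_indicator_add hE (ae_of_all _ fun ω => by positivity)
      (ae_of_all _ fun ω => abs_nonneg _) hg (ae_of_all _ hbound)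

/-- Expected bias bound via Cauchy–Schwarz and Markov. With
`B = 1[|C − Z| ≤ h|V − Z|]·|V − Z|`, `h ≥ 0`, and an event E such that outside
E we have `h ≤ kM/N` and `|C − Z| ≥ c`, we get
`E[B] ≤ √(P[E]·E[(V−Z)²]) + (kM/(cN))·E[(V−Z)²]`. -/
theorem expected_bias_bound {Ω : Type*} [MeasurableSpace Ω]
    (μ : Measure Ω) [IsProbabilityMeasure μ]
    (V Z C h : Ω → ℝ)
    (hVm : Measurable V) (hZm : Measurable Z) (hCm : Measurable C)
    (hhm : Measurable h) (hh : ∀ ω, 0 ≤ h ω)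
    (c k M N : ℝ) (hc : 0 < c) (hk : 0 < k) (hM : 0 < M) (hN : 0 < N)
    (E : Set Ω) (hE : MeasurableSet E)
    (hEc : ∀ ω ∉ E, h ω ≤ k * M / N ∧ c ≤ |C ω - Z ω|)
    (hint : Integrable (fun ω => (V ω - Z ω) ^ 2) μ) :
    (∫ ω, (if |C ω - Z ω| ≤ h ω * |V ω - Z ω| then (1 : ℝ) else 0)
        * |V ω - Z ω| ∂μ)
      ≤ Real.sqrt ((μ E).toReal * ∫ ω, (V ω - Z ω) ^ 2 ∂μ)
        + (k * M / (c * N)) * ∫ ω, (V ω - Z ω) ^ 2 ∂μ :=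
  expected_bias_bound_general μ V Z C h c k M N hc hk hM hN E hE hEc hint
end
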